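/- The function v satisfies the following recursive conditions for all nonnegative integers n: v(0) = 0; v(2n+1) = v(n); v(4n+2) = v(2n) + v(n) + b(n) − 1; and v(4n+4) = v(2n+2) + v(n) + b(n) − 1. -/

import Mathlib

/-- The value of a word over the digits `{0,1,2}`, read as a (hyper)binary expansion:
`wordVal (x₀ … x_k) = Σ x_i · 2^(k-i)`. -/
def wordVal : List ℕ → ℕ
  | [] => 0
  | d :: w => d * 2 ^ w.length + wordVal w

/-- `Hyp n` is the set of hyperbinary expansions of `n`: words over `{0,1,2}` with
nonzero leading digit whose value is `n` (the empty word is the unique expansion of `0`). -/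
def Hyp (n : ℕ) : Set (List ℕ) :=
  {w | (∀ d ∈ w, d ≤ 2) ∧ w.head? ≠ some 0 ∧ wordVal w = n}

/-- Single-step reduction of type `→` : `(x02y, x10y)` or `(2y, 10y)`. -/
def StepArrow (a b : List ℕ) : Prop :=
  (∃ x y : List ℕ, a = x ++ 0 :: 2 :: y ∧ b = x ++ 1 :: 0 :: y) ∨
    (∃ y : List ℕ, a = 2 :: y ∧ b = 1 :: 0 :: y)

/-- Single-step reduction of type `↠` : `(x12y, x20y)`. -/
def StepDouble (a b : List ℕ) : Prop :=
  ∃ x y : List ℕ, a = x ++ 1 :: 2 :: y ∧ b = x ++ 2 :: 0 :: y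

/-- A single-step reduction (of either type). -/
def Step (a b : List ℕ) : Prop := StepArrow a b ∨ StepDouble a b

/-- `bFun n` is the number of hyperbinary expansions of `n`. -/
noncomputable def bFun (n : ℕ) : ℕ := (Hyp n).ncard

/-- The set of arcs of the graph `A(n)`: labeled single-step reductions between
hyperbinary expansions of `n`. -/
def arcs (n : ℕ) : Set (List ℕ × List ℕ) :=
  {p | p.1 ∈ Hyp n ∧ p.2 ∈ Hyp n ∧ Step p.1 p.2}

/-- `aFun n` is the number of arcs of `A(n)`. -/
noncomputable def aFun (n : ℕ) : ℕ := (arcs n).ncard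

/-- The cyclomatic number `v(n) = a(n) - b(n) + 1` of the connected graph `A(n)`. -/
noncomputable def vFun (n : ℕ) : ℕ := aFun n + 1 - bFun n

lemma wordVal_append (x y : List ℕ) :
    wordVal (x ++ y) = wordVal x * 2 ^ y.length + wordVal y := by
  induction x with
  | nil => simp [wordVal]
  | cons d w ih =>
      simp only [List.cons_append, wordVal, List.append_eq, List.length_append, ih]
      rw [pow_add]
      ring

lemma wordVal_concat (w : List ℕ) (t : ℕ) :
    wordVal (w ++ [t]) = 2 * wordVal w + t := by
  simp [wordVal_append, wordVal]; ring

lemma wordVal_cons_lb {d : ℕ} (w : List ℕ) (hd : d ≠ 0) :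
    w.length + 1 ≤ wordVal (d :: w) := by
  have h1 : 2 ^ w.length ≤ d * 2 ^ w.length := Nat.le_mul_of_pos_left _ (Nat.pos_of_ne_zero hd)
  have h2 : w.length + 1 ≤ 2 ^ w.length := Nat.lt_two_pow_self (n := w.length)
  simp only [wordVal]
  omega

lemma mem_hyp_length {n : ℕ} {w : List ℕ} (hw : w ∈ Hyp n) : w.length ≤ n := by
  obtain ⟨_, hh, hv⟩ := hw
  cases w with
  | nil => simp
  | cons d v =>
      have hd : d ≠ 0 := by simp only [List.head?] at hh; intro h; exact hh (by rw [h])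
      have := wordVal_cons_lb v hd
      simp only [List.length_cons]
      omega

lemma mem_hyp_ne_nil {n : ℕ} {w : List ℕ} (hw : w ∈ Hyp n) (hn : n ≠ 0) : w ≠ [] := by
  rintro rfl
  exact hn hw.2.2.symm

lemma hyp_zero : Hyp 0 = {([] : List ℕ)} := by
  ext w
  constructor
  · intro hw
    cases w with
    | nil => rfl
    | cons d v =>
        obtain ⟨_, hh, hv⟩ := hw
        have hd : d ≠ 0 := by simp only [List.head?] at hh; intro h; exact hh (by rw [h])
        have := wordVal_cons_lb v hd
        omega
  · rintro rfl
    exact ⟨by simp, by simp, rfl⟩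

lemma hyp_finite (n : ℕ) : (Hyp n).Finite := by
  have : Hyp n ⊆ (fun l : List (Fin 3) => l.map (Fin.val)) '' {l | l.length ≤ n} := by
    intro w hw
    refine ⟨w.map (fun d => (⟨min d 2, by omega⟩ : Fin 3)), by
      simpa using mem_hyp_length hw, ?_⟩
    simp only [List.map_map]
    conv_rhs => rw [← List.map_id w]
    apply List.map_congr_left
    intro d hd
    have := hw.1 d hd
    simp; omega
  exact Set.Finite.subset (Set.Finite.image _ (List.finite_length_le _ n)) this

lemma arcs_finite (n : ℕ) : (arcs n).Finite := by
  have : arcs n ⊆ (Hyp n) ×ˢ (Hyp n) := fun p hp => ⟨hp.1, hp.2.1⟩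
  exact Set.Finite.subset (Set.Finite.prod (hyp_finite n) (hyp_finite n)) this

lemma snoc_inj {a b : List ℕ} {x y : ℕ} (h : a ++ [x] = b ++ [y]) : a = b ∧ x = y := by
  have := List.concat_inj.mp (by simpa [List.concat_eq_append] using h)
  exact this

lemma head?_concat (w : List ℕ) (t : ℕ) :
    (w ++ [t]).head? = if w = [] then some t else w.head? := by
  cases w <;> simp

lemma hyp_concat_iff {m t : ℕ} (ht : t ≤ 2) (w : List ℕ) :
    w ++ [t] ∈ Hyp (2 * m + t) ↔ (w ∈ Hyp m ∧ (w ≠ [] ∨ t ≠ 0)) := by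
  constructor
  · rintro ⟨hd, hh, hv⟩
    rw [wordVal_concat] at hv
    rw [head?_concat] at hh
    by_cases hw : w = []
    · subst hw
      have : t ≠ 0 := by rintro rfl; simp at hh
      refine ⟨⟨by simp, by simp, by simp [wordVal] at hv ⊢; omega⟩, Or.inr this⟩
    · rw [if_neg hw] at hh
      refine ⟨⟨fun d hd' => hd d (by simp [hd']), hh, by omega⟩, Or.inl hw⟩
  · rintro ⟨⟨hd, hh, hv⟩, hne⟩
    refine ⟨?_, ?_, by rw [wordVal_concat, hv]⟩
    · intro d hd'
      rcases List.mem_append.mp hd' with h | h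
      · exact hd d h
      · simp at h; omega
    · rw [head?_concat]
      by_cases hw : w = []
      · subst hw
        simp only [if_pos rfl]
        rcases hne with h | h
        · exact absurd rfl h
        · intro hc; exact h (by injection hc)
      · rwa [if_neg hw]

def EndRedex (a b : List ℕ) : Prop :=
  (∃ x, a = x ++ [0] ∧ b = x ++ [1]) ∨ (a = [] ∧ b = [1]) ∨ (∃ x, a = x ++ [1] ∧ b = x ++ [2])

lemma step_concat_same {a b : List ℕ} {t : ℕ} :
    Step (a ++ [t]) (b ++ [t]) ↔ Step a b := by
  constructor
  · intro h
    rcases h with (⟨x, y, ha, hb⟩ | ⟨y, ha, hb⟩) | ⟨x, y, ha, hb⟩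
    · rcases List.eq_nil_or_concat y with rfl | ⟨y', s, rfl⟩
      · obtain ⟨_, h2⟩ := snoc_inj (ha.trans (show x ++ 0 :: 2 :: ([]:List ℕ) = (x ++ [0]) ++ [2] by simp))
        obtain ⟨_, h0⟩ := snoc_inj (hb.trans (show x ++ 1 :: 0 :: ([]:List ℕ) = (x ++ [1]) ++ [0] by simp))
        omega
      · simp only [List.concat_eq_append] at ha hb
        rw [show x ++ 0 :: 2 :: (y' ++ [s]) = (x ++ 0 :: 2 :: y') ++ [s] by simp] at ha
        rw [show x ++ 1 :: 0 :: (y' ++ [s]) = (x ++ 1 :: 0 :: y') ++ [s] by simp] at hb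
        obtain ⟨ha', _⟩ := snoc_inj ha
        obtain ⟨hb', _⟩ := snoc_inj hb
        exact Or.inl (Or.inl ⟨x, y', ha', hb'⟩)
    · rcases List.eq_nil_or_concat y with rfl | ⟨y', s, rfl⟩
      · obtain ⟨_, h2⟩ := snoc_inj (ha.trans (show (2:ℕ) :: ([]:List ℕ) = ([] : List ℕ) ++ [2] by simp))
        obtain ⟨_, h0⟩ := snoc_inj (hb.trans (show (1:ℕ) :: 0 :: ([]:List ℕ) = [1] ++ [0] by simp))
        omega
      · simp only [List.concat_eq_append] at ha hb
        rw [show (2:ℕ) :: (y' ++ [s]) = (2 :: y') ++ [s] by simp] at ha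
        rw [show (1:ℕ) :: 0 :: (y' ++ [s]) = (1 :: 0 :: y') ++ [s] by simp] at hb
        obtain ⟨ha', _⟩ := snoc_inj ha
        obtain ⟨hb', _⟩ := snoc_inj hb
        exact Or.inl (Or.inr ⟨y', ha', hb'⟩)
    · rcases List.eq_nil_or_concat y with rfl | ⟨y', s, rfl⟩
      · obtain ⟨_, h2⟩ := snoc_inj (ha.trans (show x ++ 1 :: 2 :: ([]:List ℕ) = (x ++ [1]) ++ [2] by simp))
        obtain ⟨_, h0⟩ := snoc_inj (hb.trans (show x ++ 2 :: 0 :: ([]:List ℕ) = (x ++ [2]) ++ [0] by simp))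
        omega
      · simp only [List.concat_eq_append] at ha hb
        rw [show x ++ 1 :: 2 :: (y' ++ [s]) = (x ++ 1 :: 2 :: y') ++ [s] by simp] at ha
        rw [show x ++ 2 :: 0 :: (y' ++ [s]) = (x ++ 2 :: 0 :: y') ++ [s] by simp] at hb
        obtain ⟨ha', _⟩ := snoc_inj ha
        obtain ⟨hb', _⟩ := snoc_inj hb
        exact Or.inr ⟨x, y', ha', hb'⟩
  · intro h
    rcases h with (⟨x, y, ha, hb⟩ | ⟨y, ha, hb⟩) | ⟨x, y, ha, hb⟩
    · exact Or.inl (Or.inl ⟨x, y ++ [t], by simp [ha], by simp [hb]⟩)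
    · exact Or.inl (Or.inr ⟨y ++ [t], by simp [ha], by simp [hb]⟩)
    · exact Or.inr ⟨x, y ++ [t], by simp [ha], by simp [hb]⟩

lemma step_concat_cross {a b : List ℕ} {t s : ℕ}
    (h : Step (a ++ [t]) (b ++ [s])) (hts : t ≠ s) :
    t = 2 ∧ s = 0 ∧ EndRedex a b := by
  rcases h with (⟨x, y, ha, hb⟩ | ⟨y, ha, hb⟩) | ⟨x, y, ha, hb⟩
  · rcases List.eq_nil_or_concat y with rfl | ⟨y', s', rfl⟩
    · obtain ⟨ha', h2⟩ := snoc_inj (ha.trans (show x ++ 0 :: 2 :: ([]:List ℕ) = (x ++ [0]) ++ [2] by simp))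
      obtain ⟨hb', h0⟩ := snoc_inj (hb.trans (show x ++ 1 :: 0 :: ([]:List ℕ) = (x ++ [1]) ++ [0] by simp))
      exact ⟨h2, h0, Or.inl ⟨x, ha', hb'⟩⟩
    · simp only [List.concat_eq_append] at ha hb
      rw [show x ++ 0 :: 2 :: (y' ++ [s']) = (x ++ 0 :: 2 :: y') ++ [s'] by simp] at ha
      rw [show x ++ 1 :: 0 :: (y' ++ [s']) = (x ++ 1 :: 0 :: y') ++ [s'] by simp] at hb
      obtain ⟨_, h1⟩ := snoc_inj ha
      obtain ⟨_, h2⟩ := snoc_inj hb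
      omega
  · rcases List.eq_nil_or_concat y with rfl | ⟨y', s', rfl⟩
    · obtain ⟨ha', h2⟩ := snoc_inj (ha.trans (show (2:ℕ) :: ([]:List ℕ) = ([] : List ℕ) ++ [2] by simp))
      obtain ⟨hb', h0⟩ := snoc_inj (hb.trans (show (1:ℕ) :: 0 :: ([]:List ℕ) = [1] ++ [0] by simp))
      exact ⟨h2, h0, Or.inr (Or.inl ⟨ha', hb'⟩)⟩
    · simp only [List.concat_eq_append] at ha hb
      rw [show (2:ℕ) :: (y' ++ [s']) = (2 :: y') ++ [s'] by simp] at ha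
      rw [show (1:ℕ) :: 0 :: (y' ++ [s']) = (1 :: 0 :: y') ++ [s'] by simp] at hb
      obtain ⟨_, h1⟩ := snoc_inj ha
      obtain ⟨_, h2⟩ := snoc_inj hb
      omega
  · rcases List.eq_nil_or_concat y with rfl | ⟨y', s', rfl⟩
    · obtain ⟨ha', h2⟩ := snoc_inj (ha.trans (show x ++ 1 :: 2 :: ([]:List ℕ) = (x ++ [1]) ++ [2] by simp))
      obtain ⟨hb', h0⟩ := snoc_inj (hb.trans (show x ++ 2 :: 0 :: ([]:List ℕ) = (x ++ [2]) ++ [0] by simp))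
      exact ⟨h2, h0, Or.inr (Or.inr ⟨x, ha', hb'⟩)⟩
    · simp only [List.concat_eq_append] at ha hb
      rw [show x ++ 1 :: 2 :: (y' ++ [s']) = (x ++ 1 :: 2 :: y') ++ [s'] by simp] at ha
      rw [show x ++ 2 :: 0 :: (y' ++ [s']) = (x ++ 2 :: 0 :: y') ++ [s'] by simp] at hb
      obtain ⟨_, h1⟩ := snoc_inj ha
      obtain ⟨_, h2⟩ := snoc_inj hb
      omega

lemma endRedex_step {a b : List ℕ} (h : EndRedex a b) : Step (a ++ [2]) (b ++ [0]) := by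
  rcases h with ⟨x, ha, hb⟩ | ⟨ha, hb⟩ | ⟨x, ha, hb⟩
  · exact Or.inl (Or.inl ⟨x, [], by simp [ha], by simp [hb]⟩)
  · subst ha; subst hb
    exact Or.inl (Or.inr ⟨[], rfl, rfl⟩)
  · exact Or.inr ⟨x, [], by simp [ha], by simp [hb]⟩

lemma hyp_odd (n : ℕ) : Hyp (2 * n + 1) = (fun w => w ++ [1]) '' Hyp n := by
  ext w
  constructor
  · intro hw
    obtain ⟨w', t, rfl⟩ := (List.eq_nil_or_concat w).resolve_left (mem_hyp_ne_nil hw (by omega))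
    simp only [List.concat_eq_append] at hw ⊢
    have ht : t ≤ 2 := hw.1 t (by simp)
    have hv : 2 * wordVal w' + t = 2 * n + 1 := by
      have := hw.2.2; rwa [wordVal_concat] at this
    have ht1 : t = 1 := by omega
    subst ht1
    have := ((hyp_concat_iff (by norm_num) w').mp hw).1
    exact ⟨w', this, rfl⟩
  · rintro ⟨w', hw', rfl⟩
    exact (hyp_concat_iff (by norm_num) w').mpr ⟨hw', Or.inr (by norm_num)⟩

lemma hyp_even (m : ℕ) : Hyp (2 * m + 2) =
    (fun w => w ++ [0]) '' Hyp (m + 1) ∪ (fun w => w ++ [2]) '' Hyp m := by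
  ext w
  constructor
  · intro hw
    obtain ⟨w', t, rfl⟩ := (List.eq_nil_or_concat w).resolve_left (mem_hyp_ne_nil hw (by omega))
    simp only [List.concat_eq_append] at hw ⊢
    have ht : t ≤ 2 := hw.1 t (by simp)
    have hv : 2 * wordVal w' + t = 2 * m + 2 := by
      have := hw.2.2; rwa [wordVal_concat] at this
    have : t = 0 ∨ t = 2 := by omega
    rcases this with rfl | rfl
    · left
      have hw2 : w' ++ [0] ∈ Hyp (2 * (m + 1) + 0) := by
        convert hw using 2
        omega
      exact ⟨w', ((hyp_concat_iff (by norm_num) w').mp hw2).1, rfl⟩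
    · right
      exact ⟨w', ((hyp_concat_iff (by norm_num) w').mp hw).1, rfl⟩
  · rintro (⟨w', hw', rfl⟩ | ⟨w', hw', rfl⟩)
    · have : w' ++ [0] ∈ Hyp (2 * (m + 1) + 0) :=
        (hyp_concat_iff (by norm_num) w').mpr ⟨hw', Or.inl (mem_hyp_ne_nil hw' (by omega))⟩
      convert this using 2
      omega
    · exact (hyp_concat_iff (by norm_num) w').mpr ⟨hw', Or.inr (by norm_num)⟩

lemma concat_injOn (t : ℕ) (S : Set (List ℕ)) : Set.InjOn (fun w => w ++ [t]) S :=
  fun _ _ _ _ h => (snoc_inj h).1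

lemma b_odd (n : ℕ) : bFun (2 * n + 1) = bFun n := by
  rw [bFun, hyp_odd, Set.ncard_image_of_injOn (concat_injOn 1 _)]
  rfl

lemma b_even (m : ℕ) : bFun (2 * m + 2) = bFun (m + 1) + bFun m := by
  have hdisj : Disjoint ((fun w => w ++ [0]) '' Hyp (m + 1)) ((fun w => w ++ [2]) '' Hyp m) := by
    rw [Set.disjoint_left]
    rintro w ⟨u, _, rfl⟩ ⟨v, _, hv⟩
    have := (snoc_inj hv).2
    omega
  rw [bFun, hyp_even,
    Set.ncard_union_eq hdisj ((hyp_finite _).image _) ((hyp_finite _).image _),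
    Set.ncard_image_of_injOn (concat_injOn 0 _), Set.ncard_image_of_injOn (concat_injOn 2 _)]
  rfl

def appPair (t : ℕ) (p : List ℕ × List ℕ) : List ℕ × List ℕ := (p.1 ++ [t], p.2 ++ [t])

lemma appPair_injOn (t : ℕ) (S : Set (List ℕ × List ℕ)) : Set.InjOn (appPair t) S := by
  rintro ⟨a, b⟩ _ ⟨c, d⟩ _ h
  have h1 := congrArg Prod.fst h
  have h2 := congrArg Prod.snd h
  simp only [appPair] at h1 h2
  rw [(snoc_inj h1).1, (snoc_inj h2).1]

lemma arcs_odd (n : ℕ) : arcs (2 * n + 1) = appPair 1 '' arcs n := by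
  ext ⟨a, b⟩
  constructor
  · rintro ⟨ha, hb, hs⟩
    rw [hyp_odd] at ha hb
    obtain ⟨a', ha', rfl⟩ := ha
    obtain ⟨b', hb', rfl⟩ := hb
    exact ⟨(a', b'), ⟨ha', hb', step_concat_same.mp hs⟩, rfl⟩
  · rintro ⟨⟨a', b'⟩, ⟨ha', hb', hs⟩, heq⟩
    simp only [appPair, Prod.mk.injEq] at heq
    obtain ⟨h1, h2⟩ := heq
    subst h1; subst h2
    refine ⟨?_, ?_, step_concat_same.mpr hs⟩
    · rw [hyp_odd]; exact ⟨a', ha', rfl⟩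
    · rw [hyp_odd]; exact ⟨b', hb', rfl⟩

lemma a_odd (n : ℕ) : aFun (2 * n + 1) = aFun n := by
  rw [aFun, arcs_odd, Set.ncard_image_of_injOn (appPair_injOn 1 _)]
  rfl

def c42 (u : List ℕ) : List ℕ × List ℕ :=
  (if u.length ≤ 1 then [2] else u.dropLast ++ [0, 2], u ++ [0])

def c44 (u : List ℕ) : List ℕ × List ℕ := (u ++ [2], u.dropLast ++ [2, 0])

lemma head_ne_zero_of_hyp {n : ℕ} {x : List ℕ} (hx : x ++ [0] ∈ Hyp n) : x ≠ [] := by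
  rintro rfl
  exact hx.2.1 rfl

lemma arcs_4n2 (n : ℕ) : arcs (2 * (2 * n) + 2) =
    appPair 0 '' arcs (2 * n + 1) ∪ appPair 2 '' arcs (2 * n) ∪ c42 '' Hyp (2 * n + 1) := by
  ext ⟨a, b⟩
  constructor
  · rintro ⟨ha, hb, hs⟩
    rw [hyp_even] at ha hb
    rcases ha with ⟨a', ha', rfl⟩ | ⟨a', ha', rfl⟩ <;>
      rcases hb with ⟨b', hb', rfl⟩ | ⟨b', hb', rfl⟩
    · -- (0,0)
      exact Or.inl (Or.inl ⟨(a', b'), ⟨ha', hb', step_concat_same.mp hs⟩, rfl⟩)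
    · -- (0,2)
      exact absurd (step_concat_cross hs (by norm_num)).1 (by norm_num)
    · -- (2,0)
      obtain ⟨-, -, hred⟩ := step_concat_cross hs (by norm_num)
      rcases hred with ⟨x, rfl, rfl⟩ | ⟨rfl, rfl⟩ | ⟨x, rfl, rfl⟩
      · refine Or.inr ⟨x ++ [1], hb', ?_⟩
        have hx : x ≠ [] := head_ne_zero_of_hyp ha'
        have hl0 : x.length ≠ 0 := fun h => hx (List.length_eq_zero_iff.mp h)
        have hl : ¬((x ++ [1]).length ≤ 1) := by simpa using hx
        simp only [c42, if_neg hl, List.dropLast_concat]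
        simp [appPair]
      · refine Or.inr ⟨[1], hb', ?_⟩
        simp [c42]
      · -- a' = x ++ [1] ∈ Hyp (2n) : parity contradiction
        have hv := ha'.2.2
        rw [wordVal_concat] at hv
        omega
    · -- (2,2)
      exact Or.inl (Or.inr ⟨(a', b'), ⟨ha', hb', step_concat_same.mp hs⟩, rfl⟩)
  · rintro ((⟨⟨a', b'⟩, ⟨ha', hb', hs⟩, heq⟩ | ⟨⟨a', b'⟩, ⟨ha', hb', hs⟩, heq⟩) | ⟨u, hu, heq⟩)
    · simp only [appPair, Prod.mk.injEq] at heq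
      obtain ⟨h1, h2⟩ := heq
      subst h1; subst h2
      refine ⟨?_, ?_, step_concat_same.mpr hs⟩
      · rw [hyp_even]; exact Or.inl ⟨a', ha', rfl⟩
      · rw [hyp_even]; exact Or.inl ⟨b', hb', rfl⟩
    · simp only [appPair, Prod.mk.injEq] at heq
      obtain ⟨h1, h2⟩ := heq
      subst h1; subst h2
      refine ⟨?_, ?_, step_concat_same.mpr hs⟩
      · rw [hyp_even]; exact Or.inr ⟨a', ha', rfl⟩
      · rw [hyp_even]; exact Or.inr ⟨b', hb', rfl⟩
    · have hu2 := hu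
      rw [hyp_odd] at hu2
      obtain ⟨x, hx, rfl⟩ := hu2
      simp only [c42, Prod.mk.injEq] at heq
      obtain ⟨h1, h2⟩ := heq
      by_cases hxe : x = []
      · subst hxe
        simp only [List.nil_append, List.length_singleton, le_refl, if_pos] at h1
        subst h1; subst h2
        have hn : n = 0 := by simpa [wordVal] using hx.2.2.symm
        subst hn
        refine ⟨?_, ?_, Or.inl (Or.inr ⟨[], rfl, rfl⟩)⟩
        · exact ⟨by simp, by simp, by simp [wordVal]⟩
        · exact ⟨by simp, by simp, by simp [wordVal]⟩
      · have hne : ¬((x ++ [1]).length ≤ 1) := by simpa using hxe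
        simp only [if_neg hne, List.dropLast_concat] at h1
        subst h1; subst h2
        refine ⟨?_, ?_, Or.inl (Or.inl ⟨x, [], by simp, by simp⟩)⟩
        · have m1 : x ++ [0] ∈ Hyp (2 * n + 0) :=
            (hyp_concat_iff (by norm_num) x).mpr ⟨hx, Or.inl hxe⟩
          have m2 : (x ++ [0]) ++ [2] ∈ Hyp (2 * (2 * n) + 2) := by
            refine (hyp_concat_iff (by norm_num) _).mpr ⟨?_, Or.inr (by norm_num)⟩
            simpa using m1
          simpa using m2
        · have m2 : (x ++ [1]) ++ [0] ∈ Hyp (2 * (2 * n + 1) + 0) :=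
            (hyp_concat_iff (by norm_num) _).mpr ⟨hu, Or.inl (by simp)⟩
          have : 2 * (2 * n + 1) + 0 = 2 * (2 * n) + 2 := by ring
          rw [this] at m2
          simpa using m2

lemma c42_fst (u : List ℕ) : ∃ z, (c42 u).1 = z ++ [2] := by
  by_cases h : u.length ≤ 1
  · exact ⟨[], by simp [c42, h]⟩
  · exact ⟨u.dropLast ++ [0], by simp [c42, h]⟩

lemma c42_injOn (S : Set (List ℕ)) : Set.InjOn c42 S := by
  intro u _ v _ h
  have := congrArg Prod.snd h
  simp only [c42] at this
  exact (snoc_inj this).1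

lemma c44_injOn (S : Set (List ℕ)) : Set.InjOn c44 S := by
  intro u _ v _ h
  have := congrArg Prod.fst h
  simp only [c44] at this
  exact (snoc_inj this).1

lemma a_4n2 (n : ℕ) :
    aFun (2 * (2 * n) + 2) = aFun (2 * n + 1) + aFun (2 * n) + bFun (2 * n + 1) := by
  have fin1 : (appPair 0 '' arcs (2 * n + 1)).Finite := (arcs_finite _).image _
  have fin2 : (appPair 2 '' arcs (2 * n)).Finite := (arcs_finite _).image _
  have fin3 : (c42 '' Hyp (2 * n + 1)).Finite := (hyp_finite _).image _
  have d1 : Disjoint (appPair 0 '' arcs (2 * n + 1)) (appPair 2 '' arcs (2 * n)) := by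
    rw [Set.disjoint_left]
    rintro p ⟨q, _, rfl⟩ ⟨r, _, hr⟩
    have := (snoc_inj (congrArg Prod.fst hr)).2
    omega
  have d2 : Disjoint (appPair 0 '' arcs (2 * n + 1) ∪ appPair 2 '' arcs (2 * n))
      (c42 '' Hyp (2 * n + 1)) := by
    rw [Set.disjoint_left]
    rintro p (⟨q, _, rfl⟩ | ⟨q, _, rfl⟩) ⟨u, _, hu⟩
    · obtain ⟨z, hz⟩ := c42_fst u
      rw [hu] at hz
      have := (snoc_inj hz).2
      omega
    · have h2 := congrArg Prod.snd hu
      simp only [c42, appPair] at h2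
      have := (snoc_inj h2).2
      omega
  rw [aFun, arcs_4n2, Set.ncard_union_eq d2 (fin1.union fin2) fin3,
    Set.ncard_union_eq d1 fin1 fin2,
    Set.ncard_image_of_injOn (appPair_injOn 0 _),
    Set.ncard_image_of_injOn (appPair_injOn 2 _),
    Set.ncard_image_of_injOn (c42_injOn _)]
  rfl

lemma arcs_4n4 (n : ℕ) : arcs (2 * (2 * n + 1) + 2) =
    appPair 0 '' arcs (2 * n + 1 + 1) ∪ appPair 2 '' arcs (2 * n + 1) ∪
      c44 '' Hyp (2 * n + 1) := by
  ext ⟨a, b⟩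
  constructor
  · rintro ⟨ha, hb, hs⟩
    rw [hyp_even] at ha hb
    rcases ha with ⟨a', ha', rfl⟩ | ⟨a', ha', rfl⟩ <;>
      rcases hb with ⟨b', hb', rfl⟩ | ⟨b', hb', rfl⟩
    · exact Or.inl (Or.inl ⟨(a', b'), ⟨ha', hb', step_concat_same.mp hs⟩, rfl⟩)
    · exact absurd (step_concat_cross hs (by norm_num)).1 (by norm_num)
    · obtain ⟨-, -, hred⟩ := step_concat_cross hs (by norm_num)
      rcases hred with ⟨x, rfl, rfl⟩ | ⟨rfl, rfl⟩ | ⟨x, rfl, rfl⟩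
      · -- b' = x ++ [1] ∈ Hyp (2n+2) : parity contradiction
        have hv := hb'.2.2
        rw [wordVal_concat] at hv
        omega
      · -- b' = [1] ∈ Hyp (2n+2) : contradiction
        have hv := hb'.2.2
        simp [wordVal] at hv
      · refine Or.inr ⟨x ++ [1], ha', ?_⟩
        simp only [c44, List.dropLast_concat]
        simp [appPair]
    · exact Or.inl (Or.inr ⟨(a', b'), ⟨ha', hb', step_concat_same.mp hs⟩, rfl⟩)
  · rintro ((⟨⟨a', b'⟩, ⟨ha', hb', hs⟩, heq⟩ | ⟨⟨a', b'⟩, ⟨ha', hb', hs⟩, heq⟩) | ⟨u, hu, heq⟩)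
    · simp only [appPair, Prod.mk.injEq] at heq
      obtain ⟨h1, h2⟩ := heq
      subst h1; subst h2
      refine ⟨?_, ?_, step_concat_same.mpr hs⟩
      · rw [hyp_even]; exact Or.inl ⟨a', ha', rfl⟩
      · rw [hyp_even]; exact Or.inl ⟨b', hb', rfl⟩
    · simp only [appPair, Prod.mk.injEq] at heq
      obtain ⟨h1, h2⟩ := heq
      subst h1; subst h2
      refine ⟨?_, ?_, step_concat_same.mpr hs⟩
      · rw [hyp_even]; exact Or.inr ⟨a', ha', rfl⟩
      · rw [hyp_even]; exact Or.inr ⟨b', hb', rfl⟩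
    · have hu2 := hu
      rw [hyp_odd] at hu2
      obtain ⟨x, hx, rfl⟩ := hu2
      simp only [c44, List.dropLast_concat, Prod.mk.injEq] at heq
      obtain ⟨h1, h2⟩ := heq
      subst h1; subst h2
      refine ⟨?_, ?_, Or.inr ⟨x, [], by simp, by simp⟩⟩
      · exact (hyp_concat_iff (by norm_num) _).mpr ⟨hu, Or.inr (by norm_num)⟩
      · have m1 : x ++ [2] ∈ Hyp (2 * n + 2) :=
          (hyp_concat_iff (by norm_num) x).mpr ⟨hx, Or.inr (by norm_num)⟩
        have m2 : (x ++ [2]) ++ [0] ∈ Hyp (2 * (2 * n + 2) + 0) :=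
          (hyp_concat_iff (by norm_num) _).mpr ⟨m1, Or.inl (by simp)⟩
        have he : 2 * (2 * n + 2) + 0 = 2 * (2 * n + 1) + 2 := by ring
        rw [he] at m2
        simpa using m2

lemma a_4n4 (n : ℕ) :
    aFun (2 * (2 * n + 1) + 2) =
      aFun (2 * n + 1 + 1) + aFun (2 * n + 1) + bFun (2 * n + 1) := by
  have fin1 : (appPair 0 '' arcs (2 * n + 1 + 1)).Finite := (arcs_finite _).image _
  have fin2 : (appPair 2 '' arcs (2 * n + 1)).Finite := (arcs_finite _).image _
  have fin3 : (c44 '' Hyp (2 * n + 1)).Finite := (hyp_finite _).image _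
  have d1 : Disjoint (appPair 0 '' arcs (2 * n + 1 + 1)) (appPair 2 '' arcs (2 * n + 1)) := by
    rw [Set.disjoint_left]
    rintro p ⟨q, _, rfl⟩ ⟨r, _, hr⟩
    have := (snoc_inj (congrArg Prod.fst hr)).2
    omega
  have d2 : Disjoint (appPair 0 '' arcs (2 * n + 1 + 1) ∪ appPair 2 '' arcs (2 * n + 1))
      (c44 '' Hyp (2 * n + 1)) := by
    rw [Set.disjoint_left]
    rintro p (⟨q, _, rfl⟩ | ⟨q, _, rfl⟩) ⟨u, _, hu⟩
    · have h1 := congrArg Prod.fst hu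
      simp only [c44, appPair] at h1
      have := (snoc_inj h1).2
      omega
    · have h2 := congrArg Prod.snd hu
      simp only [c44, appPair] at h2
      rw [show u.dropLast ++ [2, 0] = (u.dropLast ++ [2]) ++ [0] by simp] at h2
      have := (snoc_inj h2).2
      omega
  rw [aFun, arcs_4n4, Set.ncard_union_eq d2 (fin1.union fin2) fin3,
    Set.ncard_union_eq d1 fin1 fin2,
    Set.ncard_image_of_injOn (appPair_injOn 0 _),
    Set.ncard_image_of_injOn (appPair_injOn 2 _),
    Set.ncard_image_of_injOn (c44_injOn _)]
  rfl

lemma val_pat1 (x y : List ℕ) :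
    wordVal (x ++ 0 :: 2 :: y) = wordVal (x ++ 1 :: 0 :: y) := by
  simp only [wordVal_append, wordVal, List.length_cons, pow_succ]
  ring

lemma val_pat2 (x y : List ℕ) :
    wordVal (x ++ 1 :: 2 :: y) = wordVal (x ++ 2 :: 0 :: y) := by
  simp only [wordVal_append, wordVal, List.length_cons, pow_succ]
  ring

lemma head?_append_cons (x : List ℕ) (d : ℕ) (z : List ℕ) :
    (x ++ d :: z).head? = if x = [] then some d else x.head? := by
  cases x <;> simp

lemma step_mem_hyp {n : ℕ} {a b : List ℕ} (ha : a ∈ Hyp n) (hs : Step a b) : b ∈ Hyp n := by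
  obtain ⟨hd, hh, hv⟩ := ha
  rcases hs with (⟨x, y, rfl, rfl⟩ | ⟨y, rfl, rfl⟩) | ⟨x, y, rfl, rfl⟩
  · refine ⟨?_, ?_, by rw [← val_pat1, hv]⟩
    · intro d hdm
      simp only [List.mem_append, List.mem_cons] at hdm ⊢
      rcases hdm with h | h | h | h
      · exact hd d (by simp [h])
      · omega
      · omega
      · exact hd d (by simp [h])
    · rw [head?_append_cons] at hh ⊢
      by_cases hx : x = []
      · simp [hx]
      · rwa [if_neg hx] at hh ⊢
  · refine ⟨?_, by simp, ?_⟩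
    · intro d hdm
      simp only [List.mem_cons] at hdm
      rcases hdm with h | h | h
      · omega
      · omega
      · exact hd d (by simp [h])
    · rw [← hv]
      simp only [wordVal, List.length_cons, pow_succ]
      ring
  · refine ⟨?_, ?_, by rw [← val_pat2, hv]⟩
    · intro d hdm
      simp only [List.mem_append, List.mem_cons] at hdm ⊢
      rcases hdm with h | h | h | h
      · exact hd d (by simp [h])
      · omega
      · omega
      · exact hd d (by simp [h])
    · rw [head?_append_cons] at hh ⊢
      by_cases hx : x = []
      · simp [hx]
      · rwa [if_neg hx] at hh ⊢

lemma exists_redex : ∀ w : List ℕ, 2 ∈ w → w.head? ≠ some 2 → (∀ d ∈ w, d ≤ 2) →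
    ∃ b, ((∃ x y, w = x ++ 0 :: 2 :: y ∧ b = x ++ 1 :: 0 :: y) ∨
          (∃ x y, w = x ++ 1 :: 2 :: y ∧ b = x ++ 2 :: 0 :: y))
  | [] => by simp
  | d :: rest => by
    intro h2 hh hd
    have hdne : d ≠ 2 := fun h => hh (by subst h; rfl)
    match rest, h2 with
    | [], h2 =>
        simp only [List.mem_singleton] at h2
        exact absurd h2.symm hdne
    | e :: y, h2 =>
    by_cases he : e = 2
    · subst he
      have : d ≤ 2 := hd d (by simp)
      interval_cases d
      · exact ⟨1 :: 0 :: y, Or.inl ⟨[], y, rfl, rfl⟩⟩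
      · exact ⟨2 :: 0 :: y, Or.inr ⟨[], y, rfl, rfl⟩⟩
      · exact absurd rfl hdne
    · have h2' : 2 ∈ e :: y := by
        rcases List.mem_cons.mp h2 with h | h
        · exact absurd h.symm hdne
        · exact h
      have hh' : (e :: y).head? ≠ some 2 := by
        simp only [List.head?]
        intro hc
        exact he (by injection hc)
      obtain ⟨b', hb'⟩ := exists_redex (e :: y) h2' hh' (fun d' hd' => hd d' (by simp [hd']))
      rcases hb' with ⟨x, z, h1, hb⟩ | ⟨x, z, h1, hb⟩
      · exact ⟨d :: b', Or.inl ⟨d :: x, z, by rw [h1]; rfl, by rw [hb]; rfl⟩⟩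
      · exact ⟨d :: b', Or.inr ⟨d :: x, z, by rw [h1]; rfl, by rw [hb]; rfl⟩⟩

lemma exists_step {n : ℕ} {w : List ℕ} (hw : w ∈ Hyp n) (h2 : 2 ∈ w) :
    ∃ b, b ∈ Hyp n ∧ Step w b := by
  by_cases hh : w.head? = some 2
  · cases w with
    | nil => simp at hh
    | cons d y =>
        have hd2 : d = 2 := by injection hh
        subst hd2
        have hs : Step (2 :: y) (1 :: 0 :: y) := Or.inl (Or.inr ⟨y, rfl, rfl⟩)
        exact ⟨1 :: 0 :: y, step_mem_hyp hw hs, hs⟩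
  · obtain ⟨b, hb⟩ := exists_redex w h2 hh hw.1
    have hs : Step w b := by
      rcases hb with ⟨x, y, h1, h2'⟩ | ⟨x, y, h1, h2'⟩
      · exact Or.inl (Or.inl ⟨x, y, h1, h2'⟩)
      · exact Or.inr ⟨x, y, h1, h2'⟩
    exact ⟨b, step_mem_hyp hw hs, hs⟩

lemma no2_unique : ∀ n : ℕ, ∀ v w : List ℕ,
    v ∈ Hyp n → w ∈ Hyp n → 2 ∉ v → 2 ∉ w → v = w := by
  intro n
  induction n using Nat.strong_induction_on with
  | _ n ih =>
    intro v w hv hw h2v h2w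
    rcases Nat.eq_zero_or_pos n with rfl | hn
    · rw [hyp_zero] at hv hw
      rw [hv, hw]
    · obtain ⟨v', s, rfl⟩ := (List.eq_nil_or_concat v).resolve_left (mem_hyp_ne_nil hv (by omega))
      obtain ⟨w', t, rfl⟩ := (List.eq_nil_or_concat w).resolve_left (mem_hyp_ne_nil hw (by omega))
      simp only [List.concat_eq_append] at *
      have hs2 : s ≠ 2 := fun h => h2v (by simp [h])
      have ht2 : t ≠ 2 := fun h => h2w (by simp [h])
      have hs : s ≤ 2 := hv.1 s (by simp)
      have ht : t ≤ 2 := hw.1 t (by simp)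
      have hvv : 2 * wordVal v' + s = n := by
        have := hv.2.2; rwa [wordVal_concat] at this
      have hww : 2 * wordVal w' + t = n := by
        have := hw.2.2; rwa [wordVal_concat] at this
      have hst : s = t := by omega
      subst hst
      have hms : 2 * (wordVal v') + s = 2 * (wordVal w') + s := by omega
      have hv' : v' ∈ Hyp (wordVal v') := by
        have hv2 := hv
        rw [← hvv] at hv2
        exact ((hyp_concat_iff (m := wordVal v') (t := s) hs v').mp hv2).1
      have hw' : w' ∈ Hyp (wordVal v') := by
        have hwv : wordVal w' = wordVal v' := by omega
        have hw2 := hw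
        rw [← hww] at hw2
        have := ((hyp_concat_iff (m := wordVal w') (t := s) hs w').mp hw2).1
        rwa [hwv] at this
      have hlt : wordVal v' < n := by omega
      have := ih (wordVal v') hlt v' w' hv' hw'
        (fun h => h2v (by simp [h])) (fun h => h2w (by simp [h]))
      rw [this]

lemma b_le_a (n : ℕ) : bFun n ≤ aFun n + 1 := by
  classical
  set S : Set (List ℕ) := {w ∈ Hyp n | 2 ∈ w} with hS
  have hsub : S ⊆ Hyp n := fun w hw => hw.1
  have hfin := hyp_finite n
  have h1 : (Hyp n \ S).ncard + S.ncard = bFun n :=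
    Set.ncard_diff_add_ncard_of_subset hsub hfin
  have h2 : (Hyp n \ S).ncard ≤ 1 := by
    rw [Set.ncard_le_one (hfin.diff)]
    rintro a ⟨ha, ha2⟩ b ⟨hb, hb2⟩
    exact no2_unique n a b ha hb (fun h => ha2 ⟨ha, h⟩) (fun h => hb2 ⟨hb, h⟩)
  have h3 : S.ncard ≤ aFun n := by
    refine Set.ncard_le_ncard_of_injOn
      (fun w => (w, if h : ∃ b, b ∈ Hyp n ∧ Step w b then h.choose else []))
      ?_ ?_ (arcs_finite n)
    · intro w hw
      have hex : ∃ b, b ∈ Hyp n ∧ Step w b := exists_step hw.1 hw.2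
      simp only [dif_pos hex]
      exact ⟨hw.1, hex.choose_spec.1, hex.choose_spec.2⟩
    · intro u _ v _ h
      exact congrArg Prod.fst h
  omega

lemma b_zero : bFun 0 = 1 := by
  rw [bFun, hyp_zero]; exact Set.ncard_singleton _

lemma a_zero : aFun 0 = 0 := by
  rw [aFun]
  convert Set.ncard_empty (List ℕ × List ℕ)
  ext ⟨a, b⟩
  simp only [Set.mem_empty_iff_false, iff_false]
  rintro ⟨ha, hb, hs⟩
  rw [hyp_zero, Set.mem_singleton_iff] at ha
  subst ha
  rcases hs with (⟨x, y, h, -⟩ | ⟨y, h, -⟩) | ⟨x, y, h, -⟩ <;> simp at h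


/-- Recursive conditions determining the cyclomatic number `v(n)` of `A(n)`. -/
theorem v_recursion :
    vFun 0 = 0 ∧
    ∀ n : ℕ,
      vFun (2 * n + 1) = vFun n ∧
      vFun (4 * n + 2) = vFun (2 * n) + vFun n + bFun n - 1 ∧
      vFun (4 * n + 4) = vFun (2 * n + 2) + vFun n + bFun n - 1 := by
  constructor
  · rw [vFun, a_zero, b_zero]
  · intro n
    refine ⟨?_, ?_, ?_⟩
    · rw [vFun, vFun, a_odd, b_odd]
    · have e : 4 * n + 2 = 2 * (2 * n) + 2 := by ring
      rw [e]
      have ha := a_4n2 n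
      rw [a_odd] at ha
      have hb := b_even (2 * n)
      have hb1 := b_odd n
      have i1 := b_le_a n
      have i2 := b_le_a (2 * n)
      simp only [vFun] at *
      omega
    · have e : 4 * n + 4 = 2 * (2 * n + 1) + 2 := by ring
      have e2 : 2 * n + 2 = 2 * n + 1 + 1 := by ring
      rw [e, e2]
      have ha := a_4n4 n
      rw [a_odd] at ha
      have hb := b_even (2 * n + 1)
      have hb1 := b_odd n
      have i1 := b_le_a n
      have i2 := b_le_a (2 * n + 1 + 1)
      simp only [vFun] at *
      omega
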